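/- The space of bounded real sequences statistically convergent to 0 (i.e., c₀(Z) ∩ ℓ∞ where Z is the density-zero ideal) is not complemented in ℓ∞, i.e., there is no bounded linear projection from ℓ∞ onto it. -/

import Mathlib

open Set Filter

/-- An ideal on ω: closed under subsets and finite unions, contains all finite sets, ω ∉ I. -/
def IsIdeal (I : Set (Set ℕ)) : Prop :=
  (∀ A B : Set ℕ, A ∈ I → B ⊆ A → B ∈ I) ∧
  (∀ A ∈ I, ∀ B ∈ I, A ∪ B ∈ I) ∧
  (∀ A : Set ℕ, A.Finite → A ∈ I) ∧
  (Set.univ : Set ℕ) ∉ I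

/-- A real sequence is I-convergent to 0. -/
def IConvZero (I : Set (Set ℕ)) (x : ℕ → ℝ) : Prop :=
  ∀ ε : ℝ, 0 < ε → {n | ε ≤ |x n|} ∈ I

/-- c₀(I) ∩ ℓ∞ : bounded sequences I-convergent to 0 (ℓ∞ = bounded functions ℕ → ℝ, sup norm). -/
def c0I (I : Set (Set ℕ)) : Set (BoundedContinuousFunction ℕ ℝ) :=
  {x | IConvZero I (fun n => x n)}

/-- An I-mad family: I-positive sets, pairwise intersections in I, maximal. -/
def IMad (I : Set (Set ℕ)) (𝒜 : Set (Set ℕ)) : Prop :=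
  (∀ A ∈ 𝒜, A ∉ I) ∧
  (∀ A ∈ 𝒜, ∀ B ∈ 𝒜, A ≠ B → A ∩ B ∈ I) ∧
  (∀ X : Set ℕ, X ∉ I → ∃ A ∈ 𝒜, X ∩ A ∉ I)

/-- The indicator sequence 1_X as an element of ℓ∞. -/
noncomputable def ind (X : Set ℕ) : BoundedContinuousFunction ℕ ℝ :=
  BoundedContinuousFunction.ofNormedAddCommGroupDiscrete (X.indicator 1) 1 (by
    intro n
    by_cases h : n ∈ X <;> simp [Set.indicator_apply, h])

/-- The asymptotic density zero ideal Z. -/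
noncomputable def densityZeroIdeal : Set (Set ℕ) :=
  {S : Set ℕ | Filter.Tendsto
    (fun n : ℕ => (Nat.card ↑(S ∩ Set.Icc 1 n) : ℝ) / n) Filter.atTop (nhds 0)}

/-!
Whitley's argument. Let `T = id - π`; it kills every finitely supported sequence. Thinning
out `ℕ` dyadically along an almost disjoint family indexed by `ℝ` gives sets `B r` of positive
upper density with pairwise finite intersections. For a bounded functional `φ` killing
finitely supported sequences, finitely many `B r` may be made disjoint without changing `φ`,
so choosing signs shows `∑ |φ (1_{B r})| ≤ ‖φ‖`; hence `φ (1_{B r}) ≠ 0` for only countably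
many `r`. Applying this to the coordinates of `T` yields an `r` with `T 1_{B r} = 0`, that is
`1_{B r} = π 1_{B r}` is statistically null, contradicting the density of `B r`.
-/

open BoundedContinuousFunction

lemma ind_apply (X : Set ℕ) (n : ℕ) : ind X n = X.indicator 1 n := rfl

lemma ind_sdiff {B C : Set ℕ} (h : C ⊆ B) : ind (B \ C) = ind B - ind C := by
  ext n
  simp only [coe_sub, Pi.sub_apply, ind_apply, Set.indicator_sdiff h]

lemma ind_mem_c0I_of_finite {I : Set (Set ℕ)} (hI : ∀ S : Set ℕ, S.Finite → S ∈ I)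
    {S : Set ℕ} (hS : S.Finite) : ind S ∈ c0I I := by
  intro ε hε
  refine hI _ (hS.subset fun n hn => ?_)
  by_contra hnS
  simp only [Set.mem_ofPred_eq, ind_apply, Set.indicator_of_notMem hnS, abs_zero] at hn
  linarith

lemma mem_of_ind_mem_c0I {I : Set (Set ℕ)} {S : Set ℕ} (h : ind S ∈ c0I I) : S ∈ I := by
  convert h 1 one_pos using 1
  ext n
  by_cases hn : n ∈ S <;> simp [ind_apply, hn]

lemma mem_densityZeroIdeal_of_finite {S : Set ℕ} (hS : S.Finite) : S ∈ densityZeroIdeal := by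
  refine squeeze_zero (fun n => by positivity) (fun n => ?_)
    (tendsto_const_div_atTop_nhds_zero_nat (Nat.card S : ℝ))
  gcongr
  exact Nat.card_mono hS Set.inter_subset_left

lemma notMem_densityZeroIdeal_of_frequently {S : Set ℕ}
    (h : ∃ᶠ n in atTop, n ≤ 2 * Nat.card ↑(S ∩ Set.Icc 1 n)) : S ∉ densityZeroIdeal := by
  intro hS
  have hsmall := (hS.eventually (gt_mem_nhds one_half_pos)).and (eventually_ge_atTop 1)
  obtain ⟨n, hn, hlt, hpos⟩ := (h.and_eventually hsmall).exists
  have hn' : (n : ℝ) ≤ 2 * Nat.card ↑(S ∩ Set.Icc 1 n) := by exact_mod_cast hn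
  rw [div_lt_iff₀ (Nat.cast_pos.2 hpos)] at hlt
  linarith

lemma finite_preimage_log {b : ℕ} (hb : 1 < b) {A : Set ℕ} (hA : A.Finite) :
    (Nat.log b ⁻¹' A).Finite :=
  hA.preimage' fun k _ => (Set.finite_Iio (b ^ (k + 1))).subset fun m hm =>
    hm ▸ Nat.lt_pow_succ_log_self hb m

-- `Nat.log 2 ⁻¹' A` is the union of the dyadic blocks `[2 ^ k, 2 ^ (k + 1))` with `k ∈ A`.
lemma notMem_densityZeroIdeal_preimage_log_two {A : Set ℕ} (hA : A.Infinite) :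
    Nat.log 2 ⁻¹' A ∉ densityZeroIdeal := by
  refine notMem_densityZeroIdeal_of_frequently ?_
  refine (tendsto_pow_atTop_atTop_of_one_lt one_lt_two).comp (tendsto_add_atTop_nat 1)
    |>.frequently_map _ (fun k (hk : k ∈ A) => ?_) (Nat.frequently_atTop_iff_infinite.2 hA)
  have hblock : Set.Ico (2 ^ k) (2 ^ (k + 1)) ⊆ Nat.log 2 ⁻¹' A ∩ Set.Icc 1 (2 ^ (k + 1)) :=
    fun m hm => ⟨by simpa [Nat.log_eq_of_pow_le_of_lt_pow hm.1 hm.2] using hk,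
      (Nat.one_le_two_pow).trans hm.1, hm.2.le⟩
  have := Nat.card_mono (Set.finite_Icc 1 _ |>.subset Set.inter_subset_right) hblock
  simp only [Function.comp, Nat.card_coe_set_eq, Set.ncard_Ico_nat] at this ⊢
  omega

noncomputable def floorGraph (c : ℝ) : Set ℕ :=
  Set.range fun n : ℕ => Nat.pair n ⌊n * c⌋₊

lemma floorGraph_infinite (c : ℝ) : (floorGraph c).Infinite :=
  Set.infinite_range_of_injective fun _ _ h => (Nat.pair_eq_pair.1 h).1

lemma finite_floorGraph_inter {c d : ℝ} (hc : 0 ≤ c) (hcd : c < d) :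
    (floorGraph c ∩ floorGraph d).Finite := by
  refine ((Set.finite_Iio ⌈1 / (d - c)⌉₊).image fun n : ℕ => Nat.pair n ⌊n * c⌋₊).subset ?_
  rintro _ ⟨⟨n, rfl⟩, ⟨m, hm⟩⟩
  obtain ⟨rfl, hfloor⟩ := Nat.pair_eq_pair.1 hm.symm
  refine ⟨n, ?_, rfl⟩
  by_contra! hn
  have hgap : n * c + 1 ≤ n * d := by
    have := Nat.ceil_le.1 (not_lt.1 hn)
    rw [div_le_iff₀ (sub_pos.2 hcd)] at this
    linarith
  have := Nat.floor_le_floor hgap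
  rw [Nat.floor_add_one (by positivity), ← hfloor] at this
  omega

lemma pairwise_finite_inter_floorGraph_exp :
    Pairwise fun r s : ℝ => (floorGraph (Real.exp r) ∩ floorGraph (Real.exp s)).Finite := by
  intro r s hrs
  rcases hrs.lt_or_gt with h | h
  · exact finite_floorGraph_inter (Real.exp_nonneg r) (Real.exp_lt_exp.2 h)
  · exact Set.inter_comm _ _ ▸ finite_floorGraph_inter (Real.exp_nonneg s) (Real.exp_lt_exp.2 h)

section Functional

variable {ι : Type*} {φ : (ℕ →ᵇ ℝ) →L[ℝ] ℝ}

lemma sum_abs_apply_ind_le_opNorm {C : ι → Set ℕ} {F : Finset ι}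
    (hC : (F : Set ι).PairwiseDisjoint C) :
    ∑ i ∈ F, |φ (ind (C i))| ≤ ‖φ‖ := by
  set s : ι → ℝ := fun i => SignType.sign (φ (ind (C i)))
  set y : ℕ →ᵇ ℝ := ∑ i ∈ F, s i • ind (C i)
  have hy : ‖y‖ ≤ 1 := by
    refine (norm_le zero_le_one).2 fun m => ?_
    calc ‖y m‖ = |∑ i ∈ F, s i * (C i).indicator 1 m| := by simp [y, ind_apply]
      _ ≤ ∑ i ∈ F, (C i).indicator 1 m := by
          refine (Finset.abs_sum_le_sum_abs _ _).trans (Finset.sum_le_sum fun i _ => ?_)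
          have hs : |s i| ≤ 1 := by
            rcases lt_trichotomy (φ (ind (C i))) 0 with h | h | h <;> simp [s, h]
          have h1 : 0 ≤ (C i).indicator (1 : ℕ → ℝ) m := Set.indicator_nonneg (by simp) m
          rw [abs_mul, abs_of_nonneg h1]
          exact mul_le_of_le_one_left h1 hs
      _ = (⋃ i ∈ F, C i).indicator 1 m := (Finset.indicator_biUnion_apply F C hC m).symm
      _ ≤ 1 := Set.indicator_le_self' (fun _ _ => zero_le_one) m
  calc ∑ i ∈ F, |φ (ind (C i))| = φ y := by
        simp only [y, s, map_sum, map_smul, smul_eq_mul, sign_mul_self]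
    _ ≤ ‖φ‖ * ‖y‖ := (le_abs_self _).trans (φ.le_opNorm y)
    _ ≤ ‖φ‖ := mul_le_of_le_one_right (norm_nonneg φ) hy

lemma apply_ind_eq_of_finite_sdiff (hφ : ∀ S : Set ℕ, S.Finite → φ (ind S) = 0) {B C : Set ℕ}
    (hCB : C ⊆ B) (hfin : (B \ C).Finite) :
    φ (ind B) = φ (ind C) := by
  rw [← sub_eq_zero, ← map_sub, ← ind_sdiff hCB, hφ _ hfin]

lemma sum_abs_apply_ind_le_opNorm_of_pairwise_finite_inter
    (hφ : ∀ S : Set ℕ, S.Finite → φ (ind S) = 0) {B : ι → Set ℕ} {F : Finset ι}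
    (hB : (F : Set ι).Pairwise fun i j => (B i ∩ B j).Finite) :
    ∑ i ∈ F, |φ (ind (B i))| ≤ ‖φ‖ := by
  set E : Set ℕ := ⋃ p ∈ F.offDiag, B p.1 ∩ B p.2
  have hE : E.Finite := F.offDiag.finite_toSet.biUnion fun p hp => by
    obtain ⟨hp₁, hp₂, hne⟩ := Finset.mem_offDiag.1 hp
    exact hB hp₁ hp₂ hne
  have hdisj : (F : Set ι).PairwiseDisjoint fun i => B i \ E := by
    intro i hi j hj hij
    refine Set.disjoint_left.2 fun m hmi hmj => hmi.2 ?_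
    exact Set.mem_iUnion₂.2 ⟨(i, j), Finset.mem_offDiag.2 ⟨hi, hj, hij⟩, hmi.1, hmj.1⟩
  calc ∑ i ∈ F, |φ (ind (B i))| = ∑ i ∈ F, |φ (ind (B i \ E))| := by
        refine Finset.sum_congr rfl fun i _ => ?_
        rw [apply_ind_eq_of_finite_sdiff hφ Set.sdiff_subset]
        exact hE.subset (by simp)
    _ ≤ ‖φ‖ := sum_abs_apply_ind_le_opNorm hdisj

lemma finite_setOf_le_abs_apply_ind (hφ : ∀ S : Set ℕ, S.Finite → φ (ind S) = 0)
    {B : ι → Set ℕ} (hB : Pairwise fun i j => (B i ∩ B j).Finite) {ε : ℝ} (hε : 0 < ε) :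
    {i | ε ≤ |φ (ind (B i))|}.Finite := by
  by_contra hinf
  obtain ⟨F, hF, hcard⟩ := Set.Infinite.exists_subset_card_eq hinf (⌊‖φ‖ / ε⌋₊ + 1)
  have hsum : ε * F.card ≤ ‖φ‖ := calc
    ε * F.card ≤ ∑ i ∈ F, |φ (ind (B i))| := by
      rw [mul_comm, ← nsmul_eq_mul]
      exact Finset.card_nsmul_le_sum F _ _ fun i hi => hF hi
    _ ≤ ‖φ‖ := sum_abs_apply_ind_le_opNorm_of_pairwise_finite_inter hφ fun i _ j _ hij => hB hij
  have hlt : ‖φ‖ / ε < F.card := by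
    rw [hcard]
    push_cast
    exact Nat.lt_floor_add_one _
  rw [div_lt_iff₀ hε] at hlt
  linarith

lemma countable_setOf_apply_ind_ne_zero (hφ : ∀ S : Set ℕ, S.Finite → φ (ind S) = 0)
    {B : ι → Set ℕ} (hB : Pairwise fun i j => (B i ∩ B j).Finite) :
    {i | φ (ind (B i)) ≠ 0}.Countable := by
  refine (Set.countable_iUnion fun k : ℕ =>
    (finite_setOf_le_abs_apply_ind hφ hB (Nat.one_div_pos_of_nat (n := k))).countable).mono ?_
  intro i hi
  obtain ⟨k, hk⟩ := exists_nat_one_div_lt (abs_pos.2 hi)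
  exact Set.mem_iUnion.2 ⟨k, hk.le⟩

end Functional

lemma countable_setOf_map_ind_ne_zero {ι α : Type*} [TopologicalSpace α] [Countable α]
    (T : (ℕ →ᵇ ℝ) →L[ℝ] (α →ᵇ ℝ)) (hT : ∀ S : Set ℕ, S.Finite → T (ind S) = 0)
    {B : ι → Set ℕ} (hB : Pairwise fun i j => (B i ∩ B j).Finite) :
    {i | T (ind (B i)) ≠ 0}.Countable := by
  refine (Set.countable_iUnion fun a : α => countable_setOf_apply_ind_ne_zero
    (φ := (evalCLM ℝ a).comp T) (fun S hS => by simp [hT S hS]) hB).mono fun i hi => ?_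
  obtain ⟨a, ha⟩ := DFunLike.ne_iff.1 hi
  exact Set.mem_iUnion.2 ⟨a, ha⟩

/-- the bounded sequences statistically convergent to 0 are not complemented
in ℓ∞. -/
theorem no_projection_onto_statConv :
    ¬ ∃ π : BoundedContinuousFunction ℕ ℝ →L[ℝ] BoundedContinuousFunction ℕ ℝ,
        Set.range π = c0I densityZeroIdeal ∧
        ∀ x ∈ c0I densityZeroIdeal, π x = x := by
  rintro ⟨π, hrange, hfix⟩
  set B : ℝ → Set ℕ := fun r => Nat.log 2 ⁻¹' floorGraph (Real.exp r)
  have hB : Pairwise fun r s => (B r ∩ B s).Finite := fun r s hrs =>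
    finite_preimage_log one_lt_two (pairwise_finite_inter_floorGraph_exp hrs)
  set T := ContinuousLinearMap.id ℝ _ - π
  have hT : ∀ S : Set ℕ, S.Finite → T (ind S) = 0 := fun S hS => by
    simp [T, hfix _ (ind_mem_c0I_of_finite (fun _ => mem_densityZeroIdeal_of_finite) hS)]
  obtain ⟨r, hr⟩ : ∃ r, T (ind (B r)) = 0 := by
    by_contra! h
    exact Cardinal.not_countable_real
      ((countable_setOf_map_ind_ne_zero T hT hB).mono fun r _ => h r)
  have hmem : ind (B r) ∈ c0I densityZeroIdeal :=
    hrange ▸ ⟨ind (B r), (sub_eq_zero.1 hr).symm⟩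
  exact notMem_densityZeroIdeal_preimage_log_two (floorGraph_infinite _)
    (mem_of_ind_mem_c0I hmem)
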